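/- arXiv:2506.02735 — 2 statements merged into one kernel-verified Lean document; each statement's English description precedes it below -/
import Mathlib

section
/- Let N₀, M be positive integers, let χ ∈ {0,1}^{N₀}, and for each ñ = 1, …, N₀ let h̃_ñ ∈ ℂ^M be a Rician channel block with parameters (ξ_ñ, β_{L,ñ}, β_{N,ñ}, a_ñ), where the blocks h̃_1, …, h̃_{N₀} are jointly independent. Set β_ñ = ξ_ñ·β_{L,ñ} + β_{N,ñ}. Then E[(Σ_{ñ=1}^{N₀} χ_ñ ‖h̃_ñ‖²)²] = M²·(Σ_{ñ} χ_ñ β_ñ)² + M·Σ_{ñ} χ_ñ·(β_{N,ñ}² + 2·ξ_ñ·β_{L,ñ}·β_{N,ñ}). -/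
open MeasureTheory ProbabilityTheory Finset

noncomputable section

/-- The uniform distribution on `[0, 2π)`. -/
def uniformAngle : Measure ℝ :=
  (ENNReal.ofReal (2 * Real.pi))⁻¹ • (volume.restrict (Set.Ico (0 : ℝ) (2 * Real.pi)))

/-- A Rician channel block with parameters `(ξ, βL, βN, a)`: a random vector
`h = ξ·√βL·e^{−iψ}·a + g ∈ ℂ^M`, where `ξ ∈ {0,1}`, `βL, βN ≥ 0`, `a` is a deterministic
vector with unit-modulus entries, `ψ` is uniformly distributed on `[0, 2π)`, and `g` is
independent of `ψ` with independent coordinates satisfying `E[g_m] = 0`, `E[g_m²] = 0`,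
`E[|g_m|²] = βN` and `E[|g_m|⁴] = 2βN²` (as for `CN(0, βN)`). -/
structure IsRicianBlock {Ω : Type*} [MeasurableSpace Ω] (μ : Measure Ω) {M : ℕ}
    (ξ βL βN : ℝ) (a : Fin M → ℂ) (h : Ω → Fin M → ℂ) : Prop where
  xi01 : ξ = 0 ∨ ξ = 1
  betaL_nonneg : 0 ≤ βL
  betaN_nonneg : 0 ≤ βN
  unit_modulus : ∀ m, ‖a m‖ = 1
  decomp : ∃ (ψ : Ω → ℝ) (g : Ω → Fin M → ℂ),
      Measurable ψ ∧ Measurable g ∧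
      (∀ ω m, h ω m
        = (ξ : ℂ) * (Real.sqrt βL : ℂ) * Complex.exp (-(Complex.I * (ψ ω : ℂ))) * a m
          + g ω m) ∧
      μ.map ψ = uniformAngle ∧
      IndepFun ψ g μ ∧
      iIndepFun (fun m ω => g ω m) μ ∧
      (∀ m, Integrable (fun ω => ‖g ω m‖ ^ 4) μ) ∧
      (∀ m, ∫ ω, g ω m ∂μ = 0) ∧
      (∀ m, ∫ ω, (g ω m) ^ 2 ∂μ = 0) ∧
      (∀ m, ∫ ω, (‖g ω m‖ ^ 2 : ℝ) ∂μ = βN) ∧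
      (∀ m, ∫ ω, (‖g ω m‖ ^ 4 : ℝ) ∂μ = 2 * βN ^ 2)

/-!
Write `c = ξ √β_L`. Coordinatewise,
`‖c e^{-iψ} a_m + g_m‖² = c² + ‖g_m‖² + 2c (cos ψ · Re(a_m ḡ_m) + sin ψ · Im(a_m ḡ_m))`,
so the energy `S = ∑ ‖h_m‖²` of a block is `M c² + Q + 2c W` with `Q = ∑ ‖g_m‖²` and
`W = cos ψ · A + sin ψ · B`, where `A`, `B` are functions of `g`. As `ψ` is uniform and
independent of `g`, `W` is uncorrelated with every function of `g` and
`E[W²] = (E[A²] + E[B²]) / 2 = M β_N / 2`, while independence of the coordinates gives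
`Var Q = M β_N²`. So a block has mean `M (c² + β_N)` and variance `M (β_N² + 2 c² β_N)`.
The theorem is `E[X²] = Var X + (E X)²` for `X = ∑ χ_j S_j`, whose variance is
`∑ χ_j² Var S_j` by independence of the blocks, and `χ_j² = χ_j`.
-/

open Real ComplexConjugate

lemma integral_uniformAngle (f : ℝ → ℝ) :
    ∫ x, f x ∂uniformAngle = (2 * π)⁻¹ * ∫ x in (0 : ℝ)..2 * π, f x := by
  rw [uniformAngle, integral_smul_measure, intervalIntegral.integral_of_le (by positivity),
    ← setIntegral_congr_set Ico_ae_eq_Ioc]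
  simp [ENNReal.toReal_inv, pi_nonneg]

lemma integral_cos_uniformAngle : ∫ x, cos x ∂uniformAngle = 0 := by
  simp [integral_uniformAngle, integral_cos]

lemma integral_sin_uniformAngle : ∫ x, sin x ∂uniformAngle = 0 := by
  simp [integral_uniformAngle, integral_sin]

lemma integral_cos_sq_uniformAngle : ∫ x, cos x ^ 2 ∂uniformAngle = 1 / 2 := by
  rw [integral_uniformAngle, integral_cos_sq, sin_two_pi, sin_zero]
  field_simp
  ring

lemma integral_sin_sq_uniformAngle : ∫ x, sin x ^ 2 ∂uniformAngle = 1 / 2 := by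
  rw [integral_uniformAngle, integral_sin_sq, sin_two_pi, sin_zero]
  field_simp
  ring

lemma integral_sin_mul_cos_uniformAngle : ∫ x, sin x * cos x ∂uniformAngle = 0 := by
  simp [integral_uniformAngle, integral_sin_mul_cos₁]

section Variance

variable {Ω : Type*} [MeasurableSpace Ω] {μ : Measure Ω}

lemma integral_sq_eq_variance_add_sq [IsProbabilityMeasure μ] {X : Ω → ℝ} (hX : MemLp X 2 μ) :
    ∫ ω, X ω ^ 2 ∂μ = Var[X; μ] + (∫ ω, X ω ∂μ) ^ 2 := by
  rw [variance_eq_sub hX]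
  simp

lemma variance_fun_sum_of_iIndepFun {ι : Type*} [Fintype ι] {X : ι → Ω → ℝ}
    (hX : ∀ i, MemLp (X i) 2 μ) (hind : iIndepFun X μ) :
    Var[fun ω => ∑ i, X i ω; μ] = ∑ i, Var[X i; μ] := by
  convert IndepFun.variance_sum (fun i _ => hX i) fun i _ j _ hij => hind.indepFun hij
  simp

lemma integral_sum_sq_of_iIndepFun [IsProbabilityMeasure μ] {ι : Type*} [Fintype ι]
    {X : ι → Ω → ℝ} (hX : ∀ i, MemLp (X i) 2 μ) (hind : iIndepFun X μ)
    (hmean : ∀ i, ∫ ω, X i ω ∂μ = 0) :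
    ∫ ω, (∑ i, X i ω) ^ 2 ∂μ = ∑ i, ∫ ω, X i ω ^ 2 ∂μ := by
  rw [integral_sq_eq_variance_add_sq (memLp_finsetSum _ fun i _ => hX i),
    variance_fun_sum_of_iIndepFun hX hind,
    integral_finsetSum _ fun i _ => (hX i).integrable one_le_two]
  simp [integral_sq_eq_variance_add_sq (hX _), hmean]

lemma memLp_two_norm_sq_of_integrable_norm_pow_four {F : Type*} [NormedAddCommGroup F]
    {f : Ω → F} (hf : AEStronglyMeasurable f μ) (h4 : Integrable (fun ω => ‖f ω‖ ^ 4) μ) :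
    MemLp (fun ω => ‖f ω‖ ^ 2) 2 μ := by
  refine (memLp_two_iff_integrable_sq (f := fun ω => ‖f ω‖ ^ 2) (hf.norm.pow 2)).2 ?_
  simpa only [← pow_mul] using h4

end Variance

section RandomPhase

variable {Ω E : Type*} [MeasurableSpace Ω] [MeasurableSpace E] {μ : Measure Ω}
  {ψ : Ω → ℝ} {G : Ω → E}

lemma integral_mul_of_uniformAngle (hψ : Measurable ψ) (hG : Measurable G)
    (hlaw : μ.map ψ = uniformAngle) (hind : IndepFun ψ G μ) {f : ℝ → ℝ} {F : E → ℝ}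
    (hf : Measurable f) (hF : Measurable F) :
    ∫ ω, f (ψ ω) * F (G ω) ∂μ = (∫ t, f t ∂uniformAngle) * ∫ ω, F (G ω) ∂μ := by
  rw [hind.integral_fun_comp_mul_comp hψ.aemeasurable hG.aemeasurable
    hf.aestronglyMeasurable hF.aestronglyMeasurable, ← hlaw,
    integral_map hψ.aemeasurable hf.aestronglyMeasurable]

lemma integrable_comp_mul_of_abs_le_one {f : ℝ → ℝ} (hf : Measurable f) (hf1 : ∀ t, |f t| ≤ 1)
    (hψ : Measurable ψ) {X : Ω → ℝ} (hX : Integrable X μ) :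
    Integrable (fun ω => f (ψ ω) * X ω) μ :=
  hX.bdd_mul (hf.comp hψ).aestronglyMeasurable (ae_of_all _ fun ω => hf1 (ψ ω))

lemma memLp_cos_mul_add_sin_mul (hψ : Measurable ψ) {X Y : Ω → ℝ} (hX : MemLp X 2 μ)
    (hY : MemLp Y 2 μ) : MemLp (fun ω => cos (ψ ω) * X ω + sin (ψ ω) * Y ω) 2 μ := by
  refine MemLp.add ?_ ?_
  · refine hX.of_le ((measurable_cos.comp hψ).aestronglyMeasurable.mul hX.1)
      (ae_of_all _ fun ω => ?_)
    simpa [abs_mul] using mul_le_of_le_one_left (abs_nonneg _) (abs_cos_le_one (ψ ω))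
  · refine hY.of_le ((measurable_sin.comp hψ).aestronglyMeasurable.mul hY.1)
      (ae_of_all _ fun ω => ?_)
    simpa [abs_mul] using mul_le_of_le_one_left (abs_nonneg _) (abs_sin_le_one (ψ ω))

lemma integral_cos_mul_add_sin_mul_of_uniformAngle (hψ : Measurable ψ) (hG : Measurable G)
    (hlaw : μ.map ψ = uniformAngle) (hind : IndepFun ψ G μ) {A B : E → ℝ}
    (hA : Measurable A) (hB : Measurable B)
    (hAi : Integrable (fun ω => A (G ω)) μ) (hBi : Integrable (fun ω => B (G ω)) μ) :
    ∫ ω, cos (ψ ω) * A (G ω) + sin (ψ ω) * B (G ω) ∂μ = 0 := by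
  rw [integral_add (integrable_comp_mul_of_abs_le_one measurable_cos abs_cos_le_one hψ hAi)
      (integrable_comp_mul_of_abs_le_one measurable_sin abs_sin_le_one hψ hBi),
    integral_mul_of_uniformAngle hψ hG hlaw hind measurable_cos hA,
    integral_mul_of_uniformAngle hψ hG hlaw hind measurable_sin hB,
    integral_cos_uniformAngle, integral_sin_uniformAngle]
  ring

lemma integral_cos_mul_add_sin_mul_sq_of_uniformAngle (hψ : Measurable ψ) (hG : Measurable G)
    (hlaw : μ.map ψ = uniformAngle) (hind : IndepFun ψ G μ) {A B : E → ℝ}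
    (hA : Measurable A) (hB : Measurable B)
    (hA2 : MemLp (fun ω => A (G ω)) 2 μ) (hB2 : MemLp (fun ω => B (G ω)) 2 μ) :
    ∫ ω, (cos (ψ ω) * A (G ω) + sin (ψ ω) * B (G ω)) ^ 2 ∂μ
      = (∫ ω, A (G ω) ^ 2 ∂μ + ∫ ω, B (G ω) ^ 2 ∂μ) / 2 := by
  have hcc : Integrable (fun ω => cos (ψ ω) ^ 2 * A (G ω) ^ 2) μ :=
    integrable_comp_mul_of_abs_le_one (f := fun t => cos t ^ 2) (by fun_prop)
      (fun t => (abs_of_nonneg (sq_nonneg _)).trans_le (cos_sq_le_one t)) hψ hA2.integrable_sq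
  have hsc : Integrable (fun ω => sin (ψ ω) * cos (ψ ω) * (2 * (A (G ω) * B (G ω)))) μ :=
    integrable_comp_mul_of_abs_le_one (f := fun t => sin t * cos t) (by fun_prop)
      (fun t => (abs_mul _ _).trans_le
        (mul_le_one₀ (abs_sin_le_one t) (abs_nonneg _) (abs_cos_le_one t)))
      hψ ((hA2.integrable_mul hB2).const_mul 2)
  have hss : Integrable (fun ω => sin (ψ ω) ^ 2 * B (G ω) ^ 2) μ :=
    integrable_comp_mul_of_abs_le_one (f := fun t => sin t ^ 2) (by fun_prop)
      (fun t => (abs_of_nonneg (sq_nonneg _)).trans_le (sin_sq_le_one t)) hψ hB2.integrable_sq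
  calc ∫ ω, (cos (ψ ω) * A (G ω) + sin (ψ ω) * B (G ω)) ^ 2 ∂μ
      = ∫ ω, cos (ψ ω) ^ 2 * A (G ω) ^ 2 + sin (ψ ω) * cos (ψ ω) * (2 * (A (G ω) * B (G ω)))
          + sin (ψ ω) ^ 2 * B (G ω) ^ 2 ∂μ := by
        congr with ω; ring
    _ = (∫ ω, A (G ω) ^ 2 ∂μ + ∫ ω, B (G ω) ^ 2 ∂μ) / 2 := by
        rw [integral_add ?_ hss, integral_add hcc hsc,
          integral_mul_of_uniformAngle (f := fun t => cos t ^ 2) (F := fun z => A z ^ 2)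
            hψ hG hlaw hind (by fun_prop) (by fun_prop),
          integral_mul_of_uniformAngle (f := fun t => sin t * cos t)
            (F := fun z => 2 * (A z * B z)) hψ hG hlaw hind (by fun_prop) (by fun_prop),
          integral_mul_of_uniformAngle (f := fun t => sin t ^ 2) (F := fun z => B z ^ 2)
            hψ hG hlaw hind (by fun_prop) (by fun_prop),
          integral_cos_sq_uniformAngle, integral_sin_mul_cos_uniformAngle,
          integral_sin_sq_uniformAngle]
        · ring
        · exact hcc.add hsc

lemma integral_add_mul_cos_add_sin_of_uniformAngle (hψ : Measurable ψ) (hG : Measurable G)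
    (hlaw : μ.map ψ = uniformAngle) (hind : IndepFun ψ G μ) {Q A B : E → ℝ}
    (hA : Measurable A) (hB : Measurable B) (hQi : Integrable (fun ω => Q (G ω)) μ)
    (hAi : Integrable (fun ω => A (G ω)) μ) (hBi : Integrable (fun ω => B (G ω)) μ) (c : ℝ) :
    ∫ ω, Q (G ω) + c * (cos (ψ ω) * A (G ω) + sin (ψ ω) * B (G ω)) ∂μ = ∫ ω, Q (G ω) ∂μ := by
  have hW : Integrable (fun ω => cos (ψ ω) * A (G ω) + sin (ψ ω) * B (G ω)) μ :=
    (integrable_comp_mul_of_abs_le_one measurable_cos abs_cos_le_one hψ hAi).add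
      (integrable_comp_mul_of_abs_le_one measurable_sin abs_sin_le_one hψ hBi)
  rw [integral_add hQi (hW.const_mul c), integral_const_mul,
    integral_cos_mul_add_sin_mul_of_uniformAngle hψ hG hlaw hind hA hB hAi hBi, mul_zero,
    add_zero]

lemma variance_add_mul_cos_add_sin_of_uniformAngle [IsProbabilityMeasure μ]
    (hψ : Measurable ψ) (hG : Measurable G)
    (hlaw : μ.map ψ = uniformAngle) (hind : IndepFun ψ G μ) {Q A B : E → ℝ}
    (hQ : Measurable Q) (hA : Measurable A) (hB : Measurable B)
    (hQ2 : MemLp (fun ω => Q (G ω)) 2 μ) (hA2 : MemLp (fun ω => A (G ω)) 2 μ)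
    (hB2 : MemLp (fun ω => B (G ω)) 2 μ) (c : ℝ) :
    Var[fun ω => Q (G ω) + c * (cos (ψ ω) * A (G ω) + sin (ψ ω) * B (G ω)); μ]
      = Var[fun ω => Q (G ω); μ] + c ^ 2 * (∫ ω, A (G ω) ^ 2 ∂μ + ∫ ω, B (G ω) ^ 2 ∂μ) / 2 := by
  set W := fun ω => cos (ψ ω) * A (G ω) + sin (ψ ω) * B (G ω) with hW
  have hW2 : MemLp W 2 μ := memLp_cos_mul_add_sin_mul hψ hA2 hB2
  have hW_mean : ∫ ω, W ω ∂μ = 0 :=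
    integral_cos_mul_add_sin_mul_of_uniformAngle hψ hG hlaw hind hA hB
      (hA2.integrable one_le_two) (hB2.integrable one_le_two)
  have hQW : ∫ ω, Q (G ω) * W ω ∂μ = 0 := by
    simp only [hW, mul_add, mul_left_comm (Q _)]
    exact integral_cos_mul_add_sin_mul_of_uniformAngle (A := fun z => Q z * A z)
      (B := fun z => Q z * B z) hψ hG hlaw hind (hQ.mul hA) (hQ.mul hB)
      (hQ2.integrable_mul hA2) (hQ2.integrable_mul hB2)
  have hcov : cov[fun ω => Q (G ω), W; μ] = 0 := by
    rw [covariance_eq_sub hQ2 hW2]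
    simp [hQW, hW_mean]
  rw [variance_fun_add hQ2 (hW2.const_mul c), covariance_const_mul_right, hcov,
    variance_const_mul, variance_eq_sub hW2, hW_mean]
  simp only [Pi.pow_apply, hW,
    integral_cos_mul_add_sin_mul_sq_of_uniformAngle hψ hG hlaw hind hA hB hA2 hB2]
  ring

end RandomPhase

section Noise

variable {Ω : Type*} [MeasurableSpace Ω] {μ : Measure Ω} [IsProbabilityMeasure μ]
  {M : ℕ} {g : Ω → Fin M → ℂ}

lemma variance_sum_norm_sq (hindep : iIndepFun (fun m ω => g ω m) μ)
    (hq : ∀ m, MemLp (fun ω => ‖g ω m‖ ^ 2) 2 μ) {βN : ℝ}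
    (h2 : ∀ m, ∫ ω, ‖g ω m‖ ^ 2 ∂μ = βN) (h4 : ∀ m, ∫ ω, ‖g ω m‖ ^ 4 ∂μ = 2 * βN ^ 2) :
    Var[fun ω => ∑ m, ‖g ω m‖ ^ 2; μ] = M * βN ^ 2 := by
  have hind : iIndepFun (fun m ω => ‖g ω m‖ ^ 2) μ :=
    hindep.comp (fun _ z => ‖z‖ ^ 2) fun _ => by fun_prop
  have hvar : ∀ m, Var[fun ω => ‖g ω m‖ ^ 2; μ] = βN ^ 2 := fun m => by
    rw [variance_eq_sub (hq m)]
    simp only [Pi.pow_apply, ← pow_mul, h2, h4]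
    ring
  simp [variance_fun_sum_of_iIndepFun hq hind, hvar]

lemma integral_sum_re_sq_add_integral_sum_im_sq (hindep : iIndepFun (fun m ω => g ω m) μ)
    (hg : ∀ m, MemLp (fun ω => g ω m) 2 μ) (hmean : ∀ m, ∫ ω, g ω m ∂μ = 0) {βN : ℝ}
    (h2 : ∀ m, ∫ ω, ‖g ω m‖ ^ 2 ∂μ = βN) {a : Fin M → ℂ} (ha : ∀ m, ‖a m‖ = 1) :
    ∫ ω, (∑ m, (a m * conj (g ω m)).re) ^ 2 ∂μ + ∫ ω, (∑ m, (a m * conj (g ω m)).im) ^ 2 ∂μ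
      = M * βN := by
  have hZ : ∀ m, MemLp (fun ω => a m * conj (g ω m)) 2 μ := fun m =>
    (hg m).star.const_mul (a m)
  have hZ_mean : ∀ m, ∫ ω, a m * conj (g ω m) ∂μ = 0 := fun m => by
    rw [integral_const_mul, integral_conj, hmean m, map_zero, mul_zero]
  have hre : ∀ m, MemLp (fun ω => (a m * conj (g ω m)).re) 2 μ := fun m => (hZ m).re
  have him : ∀ m, MemLp (fun ω => (a m * conj (g ω m)).im) 2 μ := fun m => (hZ m).im
  have hterm : ∀ m, ∫ ω, (a m * conj (g ω m)).re ^ 2 ∂μ + ∫ ω, (a m * conj (g ω m)).im ^ 2 ∂μ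
      = βN := fun m => by
    rw [← integral_add (hre m).integrable_sq (him m).integrable_sq, ← h2 m]
    congr with ω
    rw [show ‖g ω m‖ = ‖a m * conj (g ω m)‖ by simp [ha m], Complex.sq_norm,
      Complex.normSq_apply]
    ring
  rw [integral_sum_sq_of_iIndepFun hre
      (hindep.comp (fun m z => (a m * conj z).re) fun m => by fun_prop)
      fun m => (integral_re ((hZ m).integrable one_le_two)).trans (by simp [hZ_mean m]),
    integral_sum_sq_of_iIndepFun him
      (hindep.comp (fun m z => (a m * conj z).im) fun m => by fun_prop)
      fun m => (integral_im ((hZ m).integrable one_le_two)).trans (by simp [hZ_mean m]),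
    ← sum_add_distrib]
  simp only [hterm, sum_const, card_univ, Fintype.card_fin, nsmul_eq_mul]

end Noise

lemma norm_sq_phase_mul_add {a : ℂ} (ha : ‖a‖ = 1) (c t : ℝ) (z : ℂ) :
    ‖(c : ℂ) * Complex.exp (-(Complex.I * t)) * a + z‖ ^ 2
      = c ^ 2 + ‖z‖ ^ 2 + 2 * c * (cos t * (a * conj z).re + sin t * (a * conj z).im) := by
  have hx : ‖(c : ℂ) * Complex.exp (-(Complex.I * t)) * a‖ ^ 2 = c ^ 2 := by
    rw [norm_mul, norm_mul, ha, mul_comm Complex.I, ← neg_mul, ← Complex.ofReal_neg,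
      Complex.norm_exp_ofReal_mul_I]
    simp
  rw [Complex.sq_norm, Complex.normSq_add, ← Complex.sq_norm, hx, ← Complex.sq_norm,
    mul_comm Complex.I, ← neg_mul, ← Complex.ofReal_neg, Complex.exp_mul_I]
  simp only [Complex.mul_re, Complex.mul_im, Complex.add_re, Complex.add_im, Complex.ofReal_re,
    Complex.ofReal_im, Complex.cos_ofReal_re, Complex.sin_ofReal_re, Complex.cos_ofReal_im,
    Complex.sin_ofReal_im, Complex.I_re, Complex.I_im, Complex.conj_re, Complex.conj_im,
    cos_neg, sin_neg]
  ring

theorem IsRicianBlock.sum_norm_sq_moments {Ω : Type*} [MeasurableSpace Ω] {μ : Measure Ω}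
    [IsProbabilityMeasure μ] {M : ℕ} {ξ βL βN : ℝ} {a : Fin M → ℂ} {h : Ω → Fin M → ℂ}
    (hR : IsRicianBlock μ ξ βL βN a h) :
    MemLp (fun ω => ∑ m, ‖h ω m‖ ^ 2) 2 μ ∧
      ∫ ω, ∑ m, ‖h ω m‖ ^ 2 ∂μ = M * (ξ * βL + βN) ∧
      Var[fun ω => ∑ m, ‖h ω m‖ ^ 2; μ] = M * (βN ^ 2 + 2 * ξ * βL * βN) := by
  obtain ⟨ψ, g, hψ, hg, hdecomp, hlaw, hind, hindep, hg4, hmean, -, h2, h4⟩ := hR.decomp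
  set c := ξ * √βL
  have hc : c ^ 2 = ξ * βL := by
    rcases hR.xi01 with rfl | rfl <;> simp [c, Real.sq_sqrt hR.betaL_nonneg]
  set Q : (Fin M → ℂ) → ℝ := fun z => ∑ m, ‖z m‖ ^ 2
  set A : (Fin M → ℂ) → ℝ := fun z => ∑ m, (a m * conj (z m)).re
  set B : (Fin M → ℂ) → ℝ := fun z => ∑ m, (a m * conj (z m)).im
  have hS : (fun ω => ∑ m, ‖h ω m‖ ^ 2) = fun ω => M * c ^ 2
      + (Q (g ω) + 2 * c * (cos (ψ ω) * A (g ω) + sin (ψ ω) * B (g ω))) := by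
    funext ω
    have hcoord : ∀ m, h ω m = (c : ℂ) * Complex.exp (-(Complex.I * ψ ω)) * a m + g ω m :=
      fun m => by rw [hdecomp]; push_cast [c]; ring
    simp only [hcoord, norm_sq_phase_mul_add (hR.unit_modulus _), Q, A, B]
    simp only [sum_add_distrib, ← mul_sum, sum_const, card_univ, Fintype.card_fin, nsmul_eq_mul]
    ring
  have hq : ∀ m, MemLp (fun ω => ‖g ω m‖ ^ 2) 2 μ := fun m =>
    memLp_two_norm_sq_of_integrable_norm_pow_four (by fun_prop) (hg4 m)
  have hg2 : ∀ m, MemLp (fun ω => g ω m) 2 μ := fun m =>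
    (memLp_two_iff_integrable_sq_norm (by fun_prop)).2 ((hq m).integrable one_le_two)
  have hQ2 : MemLp (fun ω => Q (g ω)) 2 μ := memLp_finsetSum _ fun m _ => hq m
  have hA2 : MemLp (fun ω => A (g ω)) 2 μ :=
    memLp_finsetSum _ fun m _ => ((hg2 m).star.const_mul (a m)).re
  have hB2 : MemLp (fun ω => B (g ω)) 2 μ :=
    memLp_finsetSum _ fun m _ => ((hg2 m).star.const_mul (a m)).im
  have hQW : MemLp (fun ω => Q (g ω) + 2 * c * (cos (ψ ω) * A (g ω) + sin (ψ ω) * B (g ω))) 2 μ :=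
    hQ2.add ((memLp_cos_mul_add_sin_mul hψ hA2 hB2).const_mul (2 * c))
  refine ⟨?_, ?_, ?_⟩
  · rw [hS]
    exact (memLp_const ((M : ℝ) * c ^ 2)).add hQW
  · rw [hS, integral_add (integrable_const _) (hQW.integrable one_le_two), integral_const,
      integral_add_mul_cos_add_sin_of_uniformAngle hψ hg hlaw hind (by fun_prop) (by fun_prop)
        (hQ2.integrable one_le_two) (hA2.integrable one_le_two) (hB2.integrable one_le_two),
      integral_finsetSum _ fun m _ => (hq m).integrable one_le_two]
    simp only [probReal_univ, smul_eq_mul, one_mul, h2, hc, sum_const, card_univ,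
      Fintype.card_fin, nsmul_eq_mul]
    ring
  · rw [hS, variance_const_add (by fun_prop),
      variance_add_mul_cos_add_sin_of_uniformAngle hψ hg hlaw hind (by fun_prop) (by fun_prop)
        (by fun_prop) hQ2 hA2 hB2,
      variance_sum_norm_sq hindep hq h2 h4,
      integral_sum_re_sq_add_integral_sum_im_sq hindep hg2 hmean h2 hR.unit_modulus, mul_pow, hc]
    ring

theorem stmt8_general {Ω : Type*} [MeasurableSpace Ω] (μ : Measure Ω) [IsProbabilityMeasure μ]
    (N₀ M : ℕ)
    (χ : Fin N₀ → ℝ) (hχ : ∀ j, χ j = 0 ∨ χ j = 1)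
    (ξ βL βN : Fin N₀ → ℝ) (a : Fin N₀ → Fin M → ℂ) (h : Fin N₀ → Ω → Fin M → ℂ)
    (hR : ∀ j, IsRicianBlock μ (ξ j) (βL j) (βN j) (a j) (h j))
    (hindep : iIndepFun (fun j => h j) μ) :
    ∫ ω, (∑ j, χ j * ∑ m, ‖h j ω m‖ ^ 2) ^ 2 ∂μ
      = (M : ℝ) ^ 2 * (∑ j, χ j * (ξ j * βL j + βN j)) ^ 2
        + M * ∑ j, χ j * (βN j ^ 2 + 2 * ξ j * βL j * βN j) := by
  choose hmemLp hmean hvar using fun j => (hR j).sum_norm_sq_moments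
  have hX : ∀ j, MemLp (fun ω => χ j * ∑ m, ‖h j ω m‖ ^ 2) 2 μ :=
    fun j => (hmemLp j).const_mul (χ j)
  have hXind : iIndepFun (fun j ω => χ j * ∑ m, ‖h j ω m‖ ^ 2) μ :=
    hindep.comp (fun j z => χ j * ∑ m, ‖z m‖ ^ 2) fun j => by fun_prop
  have hχ_sq : ∀ j, χ j ^ 2 = χ j := fun j => by rcases hχ j with hj | hj <;> simp [hj]
  rw [integral_sq_eq_variance_add_sq (memLp_finsetSum _ fun j _ => hX j),
    variance_fun_sum_of_iIndepFun hX hXind,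
    integral_finsetSum _ fun j _ => (hX j).integrable one_le_two]
  simp only [variance_const_mul, integral_const_mul, hmean, hvar, hχ_sq, mul_left_comm (χ _),
    ← mul_sum]
  ring

/-- For jointly independent Rician channel blocks `h̃_1, …, h̃_{N₀}` and a
binary selection vector `χ ∈ {0,1}^{N₀}`, with `β_j = ξ_j·βL_j + βN_j`,
`E[(∑_j χ_j ‖h̃_j‖²)²] = M²·(∑_j χ_j β_j)² + M·∑_j χ_j·(βN_j² + 2·ξ_j·βL_j·βN_j)`. -/
theorem stmt8 {Ω : Type*} [MeasurableSpace Ω] (μ : Measure Ω) [IsProbabilityMeasure μ]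
    (N₀ M : ℕ) (hN₀ : 0 < N₀) (hM : 0 < M)
    (χ : Fin N₀ → ℝ) (hχ : ∀ j, χ j = 0 ∨ χ j = 1)
    (ξ βL βN : Fin N₀ → ℝ) (a : Fin N₀ → Fin M → ℂ) (h : Fin N₀ → Ω → Fin M → ℂ)
    (hR : ∀ j, IsRicianBlock μ (ξ j) (βL j) (βN j) (a j) (h j))
    (hindep : iIndepFun (fun j => h j) μ) :
    ∫ ω, (∑ j, χ j * ∑ m, ‖h j ω m‖ ^ 2) ^ 2 ∂μ
      = (M : ℝ) ^ 2 * (∑ j, χ j * (ξ j * βL j + βN j)) ^ 2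
        + M * ∑ j, χ j * (βN j ^ 2 + 2 * ξ j * βL j * βN j) :=
  stmt8_general μ N₀ M χ hχ ξ βL βN a h hR hindep
end
end

section
/- Let h ∈ ℂ^M be a Rician channel block with parameters (ξ, β_L, β_N, a) and let h′ ∈ ℂ^M be a Rician channel block with parameters (ξ′, β_L′, β_N′, a′), with h and h′ independent. Then E[|hᴴ h′|²] = ξ·ξ′·β_L·β_L′·|aᴴ a′|² + M·β_N·β_N′ + M·ξ·β_L·β_N′ + M·ξ′·β_N·β_L′. -/
open MeasureTheory ProbabilityTheory Finset

noncomputable section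

/-!
Expanding `|hᴴh'|² = ∑ₘ ∑ₙ conj(hₘ) hₙ · conj(conj(h'ₘ) h'ₙ)` and using the independence of `h`
and `h'`, the mean interference power is `Re ∑ₘ ∑ₙ Rₘₙ conj(R'ₘₙ)`, where `Rₘₙ = E[conj(hₘ) hₙ]`
is the correlation matrix of `h`. Writing `h = c·e + g` with the phase `e = e^{-iψ}` of unit
modulus, independent of the zero-mean noise `g`, the cross terms vanish and `|e|² = 1`, so
`R = ξβL·conj(a)aᵀ + βN·I` (using `ξ² = ξ`). The unit-modulus entries of `a` and `a'` turn the
diagonal of the double sum into `M(βNβN' + ξβLβN' + ξ'βL'βN)`, and its rank-one part is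
`ξξ'βLβL'|aᴴa'|²`.
-/

section

variable {Ω : Type*} [MeasurableSpace Ω] {μ : Measure Ω}

theorem MeasureTheory.Integrable.conj {f : Ω → ℂ} (hf : Integrable f μ) :
    Integrable (fun ω => starRingEnd ℂ (f ω)) μ :=
  memLp_one_iff_integrable.1 (memLp_one_iff_integrable.2 hf).star

theorem MeasureTheory.MemLp.integrable_conj_mul {X Y : Ω → ℂ} (hX : MemLp X 2 μ)
    (hY : MemLp Y 2 μ) : Integrable (fun ω => starRingEnd ℂ (X ω) * Y ω) μ :=
  hX.star.integrable_mul hY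

theorem MeasureTheory.memLp_two_of_integrable_norm_pow_four [IsFiniteMeasure μ]
    {E : Type*} [NormedAddCommGroup E] {X : Ω → E} (hX : AEStronglyMeasurable X μ)
    (h4 : Integrable (fun ω => ‖X ω‖ ^ 4) μ) : MemLp X 2 μ :=
  (memLp_two_iff_integrable_sq_norm hX).2 (integrable_norm_pow_of_le hX (by norm_num) h4)

theorem Complex.norm_sq_sum_conj_mul {ι : Type*} [Fintype ι] (x y : ι → ℂ) :
    ‖∑ i, starRingEnd ℂ (x i) * y i‖ ^ 2
      = (∑ i, ∑ j, starRingEnd ℂ (x i) * x j * starRingEnd ℂ (starRingEnd ℂ (y i) * y j)).re := by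
  rw [← Complex.normSq_eq_norm_sq, ← Complex.ofReal_re (normSq _), ← Complex.mul_conj, map_sum,
    sum_mul_sum]
  simp only [map_mul, Complex.conj_conj]
  congr 1
  exact sum_congr rfl fun i _ => sum_congr rfl fun j _ => by ring

theorem ProbabilityTheory.IndepFun.integral_norm_sq_sum_conj_mul {ι : Type*} [Fintype ι]
    {X Y : Ω → ι → ℂ} (hXY : IndepFun X Y μ) (hX : ∀ i, MemLp (fun ω => X ω i) 2 μ)
    (hY : ∀ i, MemLp (fun ω => Y ω i) 2 μ) :
    ∫ ω, ‖∑ i, starRingEnd ℂ (X ω i) * Y ω i‖ ^ 2 ∂μ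
      = (∑ i, ∑ j, (∫ ω, starRingEnd ℂ (X ω i) * X ω j ∂μ)
          * starRingEnd ℂ (∫ ω, starRingEnd ℂ (Y ω i) * Y ω j ∂μ)).re := by
  have hind : ∀ i j, IndepFun (fun ω => starRingEnd ℂ (X ω i) * X ω j)
      (fun ω => starRingEnd ℂ (starRingEnd ℂ (Y ω i) * Y ω j)) μ := fun i j =>
    hXY.comp (φ := fun x : ι → ℂ => starRingEnd ℂ (x i) * x j)
      (ψ := fun y : ι → ℂ => starRingEnd ℂ (starRingEnd ℂ (y i) * y j)) (by fun_prop) (by fun_prop)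
  have hXX := fun i j => (hX i).integrable_conj_mul (hX j)
  have hYY := fun i j => ((hY i).integrable_conj_mul (hY j)).conj
  have hint : ∀ i j, Integrable (fun ω => starRingEnd ℂ (X ω i) * X ω j
      * starRingEnd ℂ (starRingEnd ℂ (Y ω i) * Y ω j)) μ := fun i j =>
    (hind i j).integrable_mul (hXX i j) (hYY i j)
  have hint_row : ∀ i, Integrable (fun ω => ∑ j, starRingEnd ℂ (X ω i) * X ω j
      * starRingEnd ℂ (starRingEnd ℂ (Y ω i) * Y ω j)) μ := fun i =>
    integrable_finsetSum univ fun j _ => hint i j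
  calc _ = ∫ ω, (∑ i, ∑ j, starRingEnd ℂ (X ω i) * X ω j
          * starRingEnd ℂ (starRingEnd ℂ (Y ω i) * Y ω j)).re ∂μ := by
        simp_rw [Complex.norm_sq_sum_conj_mul]
    _ = (∫ ω, ∑ i, ∑ j, starRingEnd ℂ (X ω i) * X ω j
          * starRingEnd ℂ (starRingEnd ℂ (Y ω i) * Y ω j) ∂μ).re :=
        integral_re (integrable_finsetSum univ fun i _ => hint_row i)
    _ = _ := by
      rw [integral_finsetSum univ fun i _ => hint_row i]
      congr 1
      refine sum_congr rfl fun i _ => ?_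
      rw [integral_finsetSum univ fun j _ => hint i j]
      refine sum_congr rfl fun j _ => ?_
      rw [(hind i j).integral_fun_mul_eq_mul_integral (hXX i j).1 (hYY i j).1, integral_conj]

theorem ProbabilityTheory.iIndepFun.integral_conj_mul_eq_zero {ι : Type*} {g : Ω → ι → ℂ}
    (hind : iIndepFun (fun i ω => g ω i) μ) (hg : ∀ i, AEStronglyMeasurable (fun ω => g ω i) μ)
    {i j : ι} (hij : i ≠ j) (hmean : ∫ ω, g ω j ∂μ = 0) :
    ∫ ω, starRingEnd ℂ (g ω i) * g ω j ∂μ = 0 := by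
  have hind' : IndepFun (fun ω => starRingEnd ℂ (g ω i)) (fun ω => g ω j) μ :=
    (hind.indepFun hij).comp (φ := starRingEnd ℂ) (ψ := id) (by fun_prop) (by fun_prop)
  rw [hind'.integral_fun_mul_eq_mul_integral (hg i).star (hg j), hmean, mul_zero]

theorem integral_conj_mul_phase_add_of_indepFun [IsProbabilityMeasure μ] {ι : Type*}
    (c : ι → ℂ) {e : Ω → ℂ} {g : Ω → ι → ℂ} (he : ∀ ω, ‖e ω‖ = 1)
    (hem : AEStronglyMeasurable e μ) (heg : IndepFun e g μ)
    (hg : ∀ i, MemLp (fun ω => g ω i) 2 μ) (hmean : ∀ i, ∫ ω, g ω i ∂μ = 0) (i j : ι) :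
    ∫ ω, starRingEnd ℂ (c i * e ω + g ω i) * (c j * e ω + g ω j) ∂μ
      = starRingEnd ℂ (c i) * c j + ∫ ω, starRingEnd ℂ (g ω i) * g ω j ∂μ := by
  have heL2 : MemLp e 2 μ := MemLp.of_bound hem 1 (ae_of_all _ fun ω => (he ω).le)
  have hcross₁ : ∫ ω, starRingEnd ℂ (e ω) * g ω j ∂μ = 0 := by
    have hind : IndepFun (fun ω => starRingEnd ℂ (e ω)) (fun ω => g ω j) μ :=
      heg.comp (φ := starRingEnd ℂ) (ψ := fun x : ι → ℂ => x j) (by fun_prop) (by fun_prop)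
    rw [hind.integral_fun_mul_eq_mul_integral heL2.star.1 (hg j).1, hmean j, mul_zero]
  have hcross₂ : ∫ ω, starRingEnd ℂ (g ω i) * e ω ∂μ = 0 := by
    have hind : IndepFun (fun ω => starRingEnd ℂ (g ω i)) e μ :=
      heg.symm.comp (φ := fun x : ι → ℂ => starRingEnd ℂ (x i)) (ψ := id) (by fun_prop)
        (by fun_prop)
    rw [hind.integral_fun_mul_eq_mul_integral (hg i).star.1 hem, integral_conj, hmean i,
      map_zero, zero_mul]
  have hexpand : ∀ ω, starRingEnd ℂ (c i * e ω + g ω i) * (c j * e ω + g ω j)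
      = starRingEnd ℂ (c i) * c j + (starRingEnd ℂ (c i) * (starRingEnd ℂ (e ω) * g ω j)
        + c j * (starRingEnd ℂ (g ω i) * e ω)) + starRingEnd ℂ (g ω i) * g ω j := by
    intro ω
    have hee : starRingEnd ℂ (e ω) * e ω = 1 := by simp [Complex.conj_mul', he ω]
    simp only [map_add, map_mul]
    linear_combination starRingEnd ℂ (c i) * c j * hee
  have hB : Integrable (fun ω => starRingEnd ℂ (c i) * (starRingEnd ℂ (e ω) * g ω j)) μ :=
    (heL2.integrable_conj_mul (hg j)).const_mul _
  have hC : Integrable (fun ω => c j * (starRingEnd ℂ (g ω i) * e ω)) μ :=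
    ((hg i).integrable_conj_mul heL2).const_mul _
  simp_rw [hexpand]
  rw [integral_add ((integrable_const _).fun_add (hB.fun_add hC))
      ((hg i).integrable_conj_mul (hg j)),
    integral_add (integrable_const _) (hB.fun_add hC), integral_add hB hC,
    integral_const, integral_const_mul, integral_const_mul, hcross₁, hcross₂]
  simp

end

theorem Complex.re_sum_sum_rank_one_add_diag_mul_conj {ι : Type*} [Fintype ι] [DecidableEq ι]
    (x y x' y' : ℝ) {a a' : ι → ℂ} (ha : ∀ i, ‖a i‖ = 1) (ha' : ∀ i, ‖a' i‖ = 1) :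
    (∑ i, ∑ j, ((x : ℂ) * (starRingEnd ℂ (a i) * a j) + if i = j then (y : ℂ) else 0)
        * starRingEnd ℂ ((x' : ℂ) * (starRingEnd ℂ (a' i) * a' j) + if i = j then (y' : ℂ) else 0)).re
      = x * x' * ‖∑ i, starRingEnd ℂ (a i) * a' i‖ ^ 2
        + Fintype.card ι * (y * y' + x * y' + x' * y) := by
  have hterm : ∀ i j, ((x : ℂ) * (starRingEnd ℂ (a i) * a j) + if i = j then (y : ℂ) else 0)
        * starRingEnd ℂ ((x' : ℂ) * (starRingEnd ℂ (a' i) * a' j) + if i = j then (y' : ℂ) else 0)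
      = (x * x' : ℂ) * (starRingEnd ℂ (a i) * a' i * starRingEnd ℂ (starRingEnd ℂ (a j) * a' j))
        + if i = j then ((y * y' + x * y' + x' * y : ℝ) : ℂ) else 0 := by
    intro i j
    split_ifs with hij
    · subst hij
      have hai : starRingEnd ℂ (a i) * a i = 1 := by simp [Complex.conj_mul', ha i]
      have hai' : starRingEnd ℂ (a' i) * a' i = 1 := by simp [Complex.conj_mul', ha' i]
      simp only [map_add, map_mul, Complex.conj_conj, Complex.conj_ofReal]
      push_cast
      linear_combination (x * y' : ℂ) * hai + (x' * y : ℂ) * hai'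
    · simp only [add_zero, map_mul, Complex.conj_conj, Complex.conj_ofReal]
      ring
  simp only [hterm, sum_add_distrib, sum_ite_eq, mem_univ, if_true, ← mul_sum]
  rw [← sum_mul, ← map_sum, Complex.mul_conj', sum_const, card_univ, nsmul_eq_mul]
  norm_cast

namespace IsRicianBlock

variable {Ω : Type*} [MeasurableSpace Ω] {μ : Measure Ω} [IsProbabilityMeasure μ] {M : ℕ}
  {ξ βL βN : ℝ} {a : Fin M → ℂ} {h : Ω → Fin M → ℂ}

theorem exists_phase_add (hR : IsRicianBlock μ ξ βL βN a h) :
    ∃ (e : Ω → ℂ) (g : Ω → Fin M → ℂ), (∀ ω, ‖e ω‖ = 1) ∧ Measurable e ∧ IndepFun e g μ ∧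
      iIndepFun (fun m ω => g ω m) μ ∧ (∀ m, MemLp (fun ω => g ω m) 2 μ) ∧
      (∀ m, ∫ ω, g ω m ∂μ = 0) ∧ (∀ m, ∫ ω, ‖g ω m‖ ^ 2 ∂μ = βN) ∧
      h = fun ω m => (ξ * Real.sqrt βL : ℂ) * a m * e ω + g ω m := by
  obtain ⟨ψ, g, hψ, hg, hdef, -, hψg, hind, h4, hmean, -, hvar, -⟩ := hR.decomp
  refine ⟨fun ω => Complex.exp (-(Complex.I * ψ ω)), g, fun ω => ?_, by fun_prop,
    hψg.comp (φ := fun t : ℝ => Complex.exp (-(Complex.I * t))) (by fun_prop) measurable_id,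
    hind, fun m => ?_, hmean, hvar, ?_⟩
  · simp [Complex.norm_exp]
  · exact memLp_two_of_integrable_norm_pow_four (by fun_prop) (h4 m)
  · ext ω m
    rw [hdef]
    ring

theorem memLp_two (hR : IsRicianBlock μ ξ βL βN a h) (m : Fin M) :
    MemLp (fun ω => h ω m) 2 μ := by
  obtain ⟨e, g, he, hem, -, -, hg, -, -, rfl⟩ := hR.exists_phase_add
  exact ((MemLp.of_bound hem.aestronglyMeasurable 1 (ae_of_all _ fun ω => (he ω).le)).const_mul
    _).add (hg m)

theorem integral_conj_mul (hR : IsRicianBlock μ ξ βL βN a h) (m n : Fin M) :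
    ∫ ω, starRingEnd ℂ (h ω m) * h ω n ∂μ
      = ((ξ * βL : ℝ) : ℂ) * (starRingEnd ℂ (a m) * a n) + if m = n then (βN : ℂ) else 0 := by
  obtain ⟨e, g, he, hem, heg, hind, hg, hmean, hvar, rfl⟩ := hR.exists_phase_add
  beta_reduce
  rw [integral_conj_mul_phase_add_of_indepFun (fun m => (ξ * Real.sqrt βL : ℂ) * a m) he
    hem.aestronglyMeasurable heg hg hmean]
  have hcoef : starRingEnd ℂ ((ξ * Real.sqrt βL : ℂ) * a m) * ((ξ * Real.sqrt βL : ℂ) * a n)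
      = ((ξ * βL : ℝ) : ℂ) * (starRingEnd ℂ (a m) * a n) := by
    have hξ : (ξ : ℂ) * ξ = ξ := by rcases hR.xi01 with rfl | rfl <;> simp
    have hβ : (Real.sqrt βL : ℂ) * Real.sqrt βL = βL := by
      rw [← Complex.ofReal_mul, Real.mul_self_sqrt hR.betaL_nonneg]
    simp only [map_mul, Complex.conj_ofReal]
    push_cast
    linear_combination (Real.sqrt βL * Real.sqrt βL * starRingEnd ℂ (a m) * a n : ℂ) * hξ
      + (ξ * starRingEnd ℂ (a m) * a n : ℂ) * hβ
  rw [hcoef]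
  split_ifs with hmn
  · subst hmn
    simp_rw [Complex.conj_mul', ← Complex.ofReal_pow]
    rw [integral_complex_ofReal, hvar]
  · rw [hind.integral_conj_mul_eq_zero (fun k => (hg k).1) hmn (hmean n)]

end IsRicianBlock

theorem stmt11_general {Ω : Type*} [MeasurableSpace Ω] (μ : Measure Ω) [IsProbabilityMeasure μ]
    (M : ℕ) (ξ βL βN ξ' βL' βN' : ℝ)
    (a a' : Fin M → ℂ) (h h' : Ω → Fin M → ℂ)
    (hR : IsRicianBlock μ ξ βL βN a h)
    (hR' : IsRicianBlock μ ξ' βL' βN' a' h')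
    (hindep : IndepFun h h' μ) :
    ∫ ω, (‖∑ m, (starRingEnd ℂ) (h ω m) * h' ω m‖) ^ 2 ∂μ
      = ξ * ξ' * βL * βL' * (‖∑ m, (starRingEnd ℂ) (a m) * a' m‖) ^ 2
        + M * βN * βN' + M * ξ * βL * βN' + M * ξ' * βN * βL' := by
  rw [hindep.integral_norm_sq_sum_conj_mul hR.memLp_two hR'.memLp_two]
  simp_rw [hR.integral_conj_mul, hR'.integral_conj_mul]
  rw [Complex.re_sum_sum_rank_one_add_diag_mul_conj _ _ _ _ hR.unit_modulus hR'.unit_modulus,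
    Fintype.card_fin]
  ring

/-- For independent Rician channel blocks `h` and `h'` with respective
parameters `(ξ, βL, βN, a)` and `(ξ', βL', βN', a')`, the mean interference power is
`E[|hᴴ h'|²] = ξ·ξ'·βL·βL'·|aᴴ a'|² + M·βN·βN' + M·ξ·βL·βN' + M·ξ'·βN·βL'`. -/
theorem stmt11 {Ω : Type*} [MeasurableSpace Ω] (μ : Measure Ω) [IsProbabilityMeasure μ]
    (M : ℕ) (hM : 0 < M) (ξ βL βN ξ' βL' βN' : ℝ)
    (a a' : Fin M → ℂ) (h h' : Ω → Fin M → ℂ)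
    (hR : IsRicianBlock μ ξ βL βN a h)
    (hR' : IsRicianBlock μ ξ' βL' βN' a' h')
    (hindep : IndepFun h h' μ) :
    ∫ ω, (‖∑ m, (starRingEnd ℂ) (h ω m) * h' ω m‖) ^ 2 ∂μ
      = ξ * ξ' * βL * βL' * (‖∑ m, (starRingEnd ℂ) (a m) * a' m‖) ^ 2
        + M * βN * βN' + M * ξ * βL * βN' + M * ξ' * βN * βL' :=
  stmt11_general μ M ξ βL βN ξ' βL' βN' a a' h h' hR hR' hindep
end
end
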